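/- Let λ > 0, 0 < a < 1/λ, and φ the partly quadratic penalty. For an n×n real matrix Y, the function Ψ(X) = (1/2)‖Y-X‖_F² + λ·Σᵢ φ(σᵢ(X);a) is strictly convex in X. -/

import Mathlib

open Matrix

/-- Singular values of a real square matrix, in nonincreasing order. -/
noncomputable def svals {n : ℕ} (A : Matrix (Fin n) (Fin n) ℝ) : Fin n → ℝ :=
  fun i =>
    let e : Fin n → ℝ := fun j => Real.sqrt ((Matrix.isHermitian_conjTranspose_mul_self A).eigenvalues j)
    (e ∘ Tuple.sort e) i.rev

/-!
For `s ≥ 0` and `c = 1/a` one has `λ φ(s) = λ/(2a) - (λa/2) (c - s)₊²`, and `‖X‖_F² = Σ σᵢ(X)²`, so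
`Ψ(X) = Σᵢⱼ (½ (Yᵢⱼ - Xᵢⱼ)² - (λa/2) Xᵢⱼ²) + (λa/2) Σᵢ h(σᵢ(X)) + const` with
`h(s) = s² - (c - s)₊²`. The first sum is strictly convex because `λa < 1`. The second is convex:
`h(s) = max_{t ≥ c} (2 s t - t²)`, and by von Neumann's trace inequality `Σᵢ h(σᵢ(X))` is the
maximum of the affine functions `X ↦ 2 tr(XᵀZ) - ‖Z‖_F²` over the matrices `Z` whose singular
values are all `≥ c`, attained at `Z = U diag(max(σᵢ, c)) Vᵀ` for an SVD `X = U diag(σ) Vᵀ`.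

Von Neumann's inequality `tr(AᵀB) ≤ Σ σᵢ(A) σᵢ(B)`: with SVDs of `A` and `B` the trace is
`Σᵢⱼ σᵢ(A) σⱼ(B) Pᵢⱼ Qᵢⱼ` for orthogonal `P`, `Q`; and `Pᵢⱼ Qᵢⱼ ≤ (Pᵢⱼ² + Qᵢⱼ²)/2`, a doubly
stochastic matrix, on which the bilinear form is maximised at a permutation matrix (Birkhoff), where
the rearrangement inequality applies.
-/

theorem convexOn_of_le_of_exists_eq {E ι : Type*} [AddCommMonoid E] [Module ℝ E] {s : Set E}
    (hs : Convex ℝ s) {f : E → ℝ} {g : ι → E → ℝ} (hg : ∀ i, ConvexOn ℝ s (g i))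
    (hgf : ∀ i, ∀ x ∈ s, g i x ≤ f x) (hfg : ∀ x ∈ s, ∃ i, g i x = f x) : ConvexOn ℝ s f := by
  refine ⟨hs, fun x hx y hy a b ha hb hab => ?_⟩
  obtain ⟨i, hi⟩ := hfg _ (hs hx hy ha hb hab)
  calc f (a • x + b • y) = g i (a • x + b • y) := hi.symm
    _ ≤ a • g i x + b • g i y := (hg i).2 hx hy ha hb hab
    _ ≤ a • f x + b • f y := by gcongr <;> exact hgf i _ ‹_›

theorem strictConvexOn_univ_pi_sum {ι : Type*} [Fintype ι] {E : ι → Type*}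
    [∀ i, AddCommMonoid (E i)] [∀ i, Module ℝ (E i)] {f : ∀ i, E i → ℝ}
    (hf : ∀ i, StrictConvexOn ℝ Set.univ (f i)) :
    StrictConvexOn ℝ Set.univ (fun x : ∀ i, E i => ∑ i, f i (x i)) := by
  refine ⟨convex_univ, fun x _ y _ hxy a b ha hb hab => ?_⟩
  obtain ⟨i, hi⟩ := Function.ne_iff.mp hxy
  simp only [Pi.add_apply, Pi.smul_apply, smul_eq_mul, Finset.mul_sum, ← Finset.sum_add_distrib]
  exact Finset.sum_lt_sum (fun j _ => (hf j).convexOn.2 trivial trivial ha.le hb.le hab)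
    ⟨i, Finset.mem_univ _, (hf i).2 trivial trivial hi ha hb hab⟩

theorem strictConvexOn_univ_quadratic {α : ℝ} (hα : 0 < α) (β γ : ℝ) :
    StrictConvexOn ℝ Set.univ (fun x : ℝ => α * x ^ 2 + β * x + γ) := by
  refine ⟨convex_univ, fun x _ y _ hxy a b ha hb hab => ?_⟩
  have hgap : 0 < α * (a * b * (x - y) ^ 2) := by
    have := sub_ne_zero.2 hxy
    positivity
  obtain rfl : b = 1 - a := by linarith
  simp only [smul_eq_mul]
  nlinarith

theorem two_mul_mul_sub_sq_le {c t : ℝ} (hct : c ≤ t) (s : ℝ) :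
    2 * s * t - t ^ 2 ≤ s ^ 2 - max (c - s) 0 ^ 2 := by
  rcases le_total c s with hcs | hsc
  · rw [max_eq_right (by linarith)]
    nlinarith [sq_nonneg (s - t)]
  · rw [max_eq_left (by linarith)]
    nlinarith [mul_nonneg (sub_nonneg.2 hct) (sub_nonneg.2 hsc)]

theorem two_mul_mul_max_sub_sq (c s : ℝ) :
    2 * s * max s c - max s c ^ 2 = s ^ 2 - max (c - s) 0 ^ 2 := by
  rcases le_total c s with hcs | hsc
  · rw [max_eq_left hcs, max_eq_right (by linarith)]
    ring
  · rw [max_eq_right hsc, max_eq_left (by linarith)]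
    ring

section OrthogonalMatrices

variable {ι : Type*} [Fintype ι]

theorem mulVec_dotProduct_mulVec (A : Matrix ι ι ℝ) (x y : ι → ℝ) :
    (A *ᵥ x) ⬝ᵥ (A *ᵥ y) = x ⬝ᵥ ((Aᵀ * A) *ᵥ y) := by
  rw [dotProduct_mulVec, dotProduct_mulVec, ← vecMul_transpose, vecMul_vecMul]

variable [DecidableEq ι]

theorem transpose_mul_mem_orthogonalGroup {U V : Matrix ι ι ℝ} (hU : U ∈ orthogonalGroup ι ℝ)
    (hV : V ∈ orthogonalGroup ι ℝ) : Uᵀ * V ∈ orthogonalGroup ι ℝ := by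
  rw [mem_orthogonalGroup_iff', transpose_mul, transpose_transpose, Matrix.mul_assoc,
    ← Matrix.mul_assoc U, (mem_orthogonalGroup_iff _ _).1 hU, Matrix.one_mul,
    (mem_orthogonalGroup_iff' _ _).1 hV]

theorem exists_mem_orthogonalGroup_mul_diagonal {B : Matrix ι ι ℝ} {d : ι → ℝ}
    (hB : Bᵀ * B = diagonal d) :
    ∃ U ∈ orthogonalGroup ι ℝ, B = U * diagonal (fun j => √(d j)) := by
  let f : ι → EuclideanSpace ℝ ι := fun j => WithLp.toLp 2 (Bᵀ j)
  have hinner : ∀ i j, inner ℝ (f i) (f j) = if i = j then d i else 0 := by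
    intro i j
    rw [← diagonal_apply, ← hB]
    simp [f, PiLp.inner_apply, mul_apply, mul_comm]
  have hd : ∀ j, d j = ‖f j‖ ^ 2 := by
    intro j
    rw [← real_inner_self_eq_norm_sq, hinner, if_pos rfl]
  let v : ι → EuclideanSpace ℝ ι := fun j => ‖f j‖⁻¹ • f j
  have hv : Orthonormal ℝ ({j | f j ≠ 0}.domRestrict v) := by
    rw [orthonormal_iff_ite]
    rintro ⟨i, hi⟩ ⟨j, hj⟩
    simp only [Set.domRestrict_apply, v, real_inner_smul_left, real_inner_smul_right, hinner,
      Subtype.mk.injEq]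
    split_ifs with hij
    · subst hij
      rw [hd]
      field_simp [norm_ne_zero_iff.2 hi]
    · simp
  obtain ⟨b, hb⟩ := hv.exists_orthonormalBasis_extension_of_card_eq (by simp)
  have hfb : ∀ j, f j = ‖f j‖ • b j := by
    intro j
    by_cases hj : f j = 0
    · simp [hj]
    · rw [hb j hj, smul_smul, mul_inv_cancel₀ (norm_ne_zero_iff.2 hj), one_smul]
  refine ⟨(EuclideanSpace.basisFun ι ℝ).toBasis.toMatrix b.toBasis,
    (EuclideanSpace.basisFun ι ℝ).toMatrix_orthonormalBasis_mem_unitary b, ?_⟩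
  ext i j
  rw [mul_diagonal, hd, Real.sqrt_sq (norm_nonneg _)]
  simpa [f, Module.Basis.toMatrix_apply, mul_comm] using congrArg (· i) (hfb j)

theorem trace_diagonal_mul_mul_diagonal_mul_transpose (d e : ι → ℝ) (P Q : Matrix ι ι ℝ) :
    trace (diagonal d * P * diagonal e * Qᵀ) = d ⬝ᵥ ((P ⊙ Q) *ᵥ e) := by
  have h : diagonal d * P * diagonal e = of fun i j => d i * P i j * e j := by
    ext i j
    simp only [mul_diagonal, diagonal_mul, of_apply]
  simp only [h, trace, diag_apply, mul_apply, of_apply, transpose_apply, dotProduct, mulVec,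
    hadamard_apply, Finset.mul_sum]
  exact Finset.sum_congr rfl fun i _ => Finset.sum_congr rfl fun j _ => by ring

theorem trace_transpose_mul_eq_dotProduct_hadamard_mulVec (U₁ V₁ U₂ V₂ : Matrix ι ι ℝ)
    (d e : ι → ℝ) :
    trace ((U₁ * diagonal d * V₁ᵀ)ᵀ * (U₂ * diagonal e * V₂ᵀ))
      = d ⬝ᵥ (((U₁ᵀ * U₂) ⊙ (V₁ᵀ * V₂)) *ᵥ e) := by
  rw [← trace_diagonal_mul_mul_diagonal_mul_transpose]
  simp only [transpose_mul, transpose_transpose, diagonal_transpose, Matrix.mul_assoc]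
  rw [trace_mul_comm V₁]
  simp only [Matrix.mul_assoc]

theorem trace_transpose_mul_of_mem_orthogonalGroup {U V : Matrix ι ι ℝ}
    (hU : U ∈ orthogonalGroup ι ℝ) (hV : V ∈ orthogonalGroup ι ℝ) (d e : ι → ℝ) :
    trace ((U * diagonal d * Vᵀ)ᵀ * (U * diagonal e * Vᵀ)) = d ⬝ᵥ e := by
  rw [trace_transpose_mul_eq_dotProduct_hadamard_mulVec, (mem_orthogonalGroup_iff' _ _).1 hU,
    (mem_orthogonalGroup_iff' _ _).1 hV, hadamard_one, diag_one]
  simp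

theorem sq_mul_dotProduct_self_le_of_mem_orthogonalGroup {U V : Matrix ι ι ℝ}
    (hU : U ∈ orthogonalGroup ι ℝ) (hV : V ∈ orthogonalGroup ι ℝ) {m : ι → ℝ} {c : ℝ}
    (hm : ∀ i, c ≤ m i) (hc : 0 ≤ c) (v : ι → ℝ) :
    c ^ 2 * (v ⬝ᵥ v) ≤ ((U * diagonal m * Vᵀ) *ᵥ v) ⬝ᵥ ((U * diagonal m * Vᵀ) *ᵥ v) := by
  set y := Vᵀ *ᵥ v
  have hy : y ⬝ᵥ y = v ⬝ᵥ v := by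
    rw [mulVec_dotProduct_mulVec, transpose_transpose, (mem_orthogonalGroup_iff _ _).1 hV,
      one_mulVec]
  have hZ : ((U * diagonal m * Vᵀ) *ᵥ v) ⬝ᵥ ((U * diagonal m * Vᵀ) *ᵥ v)
      = ∑ i, m i ^ 2 * (y i * y i) := by
    rw [← mulVec_mulVec, ← mulVec_mulVec, mulVec_dotProduct_mulVec,
      (mem_orthogonalGroup_iff' _ _).1 hU, one_mulVec]
    simp only [dotProduct, mulVec_diagonal]
    exact Finset.sum_congr rfl fun i _ => by ring
  rw [hZ, ← hy, dotProduct, Finset.mul_sum]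
  gcongr with i _
  · exact mul_self_nonneg _
  · exact hm i

theorem hadamard_self_mem_doublyStochastic {P : Matrix ι ι ℝ} (hP : P ∈ orthogonalGroup ι ℝ) :
    P ⊙ P ∈ doublyStochastic ℝ ι := by
  refine mem_doublyStochastic_iff_sum.2 ⟨fun i j => mul_self_nonneg (P i j), fun i => ?_,
    fun j => ?_⟩
  · simpa [mul_apply] using congrFun (congrFun ((mem_orthogonalGroup_iff _ _).1 hP) i) i
  · simpa [mul_apply] using congrFun (congrFun ((mem_orthogonalGroup_iff' _ _).1 hP) j) j

theorem dotProduct_mulVec_le_of_mem_doublyStochastic {σ τ : ι → ℝ} (hστ : Monovary σ τ)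
    {M : Matrix ι ι ℝ} (hM : M ∈ doublyStochastic ℝ ι) : σ ⬝ᵥ (M *ᵥ τ) ≤ σ ⬝ᵥ τ := by
  have hconv : ConvexOn ℝ Set.univ (fun M : Matrix ι ι ℝ => σ ⬝ᵥ (M *ᵥ τ)) :=
    ⟨convex_univ, fun _ _ _ _ _ _ _ _ _ => le_of_eq (by
      simp only [add_mulVec, smul_mulVec, dotProduct_add, dotProduct_smul])⟩
  rw [← SetLike.mem_coe, doublyStochastic_eq_convexHull_permMatrix] at hM
  obtain ⟨_, ⟨π, rfl⟩, hπ⟩ := hconv.exists_ge_of_mem_convexHull (Set.subset_univ _) hM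
  calc σ ⬝ᵥ (M *ᵥ τ) ≤ ∑ i, σ i * τ (π i) := by simpa [permMatrix_mulVec, dotProduct] using hπ
    _ ≤ σ ⬝ᵥ τ := hστ.sum_mul_comp_perm_le_sum_mul

end OrthogonalMatrices

section SingularValues

variable {n : ℕ}

theorem exists_perm_svals_eq_sqrt_eigenvalues (A : Matrix (Fin n) (Fin n) ℝ) :
    ∃ ρ : Equiv.Perm (Fin n), ∀ i,
      svals A i = √((isHermitian_conjTranspose_mul_self A).eigenvalues (ρ i)) :=
  ⟨Fin.revPerm.trans (Tuple.sort _), fun _ => rfl⟩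

theorem svals_nonneg (A : Matrix (Fin n) (Fin n) ℝ) (i : Fin n) : 0 ≤ svals A i :=
  Real.sqrt_nonneg _

theorem svals_antitone (A : Matrix (Fin n) (Fin n) ℝ) : Antitone (svals A) :=
  fun _ _ hij => Tuple.monotone_sort
    (fun j => √((isHermitian_conjTranspose_mul_self A).eigenvalues j)) (Fin.rev_le_rev.mpr hij)

theorem exists_mem_orthogonalGroup_transpose_mul_self_eq (A : Matrix (Fin n) (Fin n) ℝ) :
    ∃ V ∈ orthogonalGroup (Fin n) ℝ, Vᵀ * (Aᵀ * A) * V = diagonal (fun i => svals A i ^ 2) := by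
  obtain ⟨ρ, hρ⟩ := exists_perm_svals_eq_sqrt_eigenvalues A
  set hA := isHermitian_conjTranspose_mul_self A
  set W : Matrix (Fin n) (Fin n) ℝ := ↑hA.eigenvectorUnitary
  have hW : Wᵀ * (Aᵀ * A) * W = diagonal hA.eigenvalues := by
    simpa [W, Unitary.conjStarAlgAut_star_apply, star_eq_conjTranspose] using
      hA.conjStarAlgAut_star_eigenvectorUnitary
  refine ⟨W.submatrix id ρ, ?_, ?_⟩
  · rw [mem_orthogonalGroup_iff, transpose_submatrix, submatrix_mul_transpose_submatrix,
      ← mem_orthogonalGroup_iff]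
    exact hA.eigenvectorUnitary.2
  · have hsub : (Wᵀ * (Aᵀ * A) * W).submatrix ρ ρ
        = (W.submatrix id ρ)ᵀ * (Aᵀ * A) * W.submatrix id ρ := by
      rw [submatrix_mul _ _ _ id _ Function.bijective_id,
        submatrix_mul _ _ _ id _ Function.bijective_id, submatrix_id_id, transpose_submatrix]
    rw [← hsub, hW, submatrix_diagonal_equiv]
    congr 1
    ext i
    rw [Function.comp_apply, hρ, Real.sq_sqrt]
    exact (posSemidef_conjTranspose_mul_self A).eigenvalues_nonneg _

theorem exists_svd (A : Matrix (Fin n) (Fin n) ℝ) :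
    ∃ U ∈ orthogonalGroup (Fin n) ℝ, ∃ V ∈ orthogonalGroup (Fin n) ℝ,
      A = U * diagonal (svals A) * Vᵀ := by
  obtain ⟨V, hV, hVA⟩ := exists_mem_orthogonalGroup_transpose_mul_self_eq A
  obtain ⟨U, hU, hAV⟩ := exists_mem_orthogonalGroup_mul_diagonal (B := A * V) (by
    rwa [transpose_mul, Matrix.mul_assoc, ← Matrix.mul_assoc Aᵀ, ← Matrix.mul_assoc])
  refine ⟨U, hU, V, hV, ?_⟩
  simp only [Real.sqrt_sq (svals_nonneg A _)] at hAV
  rw [← hAV, Matrix.mul_assoc, (mem_orthogonalGroup_iff _ _).1 hV, Matrix.mul_one]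

theorem le_svals_of_forall_le_mulVec {A : Matrix (Fin n) (Fin n) ℝ} {c : ℝ} (hc : 0 ≤ c)
    (hA : ∀ v, c ^ 2 * (v ⬝ᵥ v) ≤ (A *ᵥ v) ⬝ᵥ (A *ᵥ v)) (i : Fin n) : c ≤ svals A i := by
  obtain ⟨ρ, hρ⟩ := exists_perm_svals_eq_sqrt_eigenvalues A
  set hH := isHermitian_conjTranspose_mul_self A
  set w : Fin n → ℝ := ⇑(hH.eigenvectorBasis (ρ i))
  have hw : w ⬝ᵥ w = 1 := by
    have := real_inner_self_eq_norm_sq (hH.eigenvectorBasis (ρ i))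
    rw [hH.eigenvectorBasis.orthonormal.1 (ρ i), EuclideanSpace.inner_eq_star_dotProduct] at this
    simpa [w] using this
  have heig : hH.eigenvalues (ρ i) = (A *ᵥ w) ⬝ᵥ (A *ᵥ w) := by
    rw [hH.eigenvalues_eq, mulVec_dotProduct_mulVec]
    simp [w, conjTranspose_eq_transpose_of_trivial]
  rw [hρ, ← Real.sqrt_sq hc, heig]
  gcongr
  simpa [hw] using hA w

theorem trace_transpose_mul_le_svals_dotProduct (A B : Matrix (Fin n) (Fin n) ℝ) :
    trace (Aᵀ * B) ≤ svals A ⬝ᵥ svals B := by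
  obtain ⟨U₁, hU₁, V₁, hV₁, hA⟩ := exists_svd A
  obtain ⟨U₂, hU₂, V₂, hV₂, hB⟩ := exists_svd B
  set P := U₁ᵀ * U₂
  set Q := V₁ᵀ * V₂
  have hP : P ∈ orthogonalGroup (Fin n) ℝ := transpose_mul_mem_orthogonalGroup hU₁ hU₂
  have hQ : Q ∈ orthogonalGroup (Fin n) ℝ := transpose_mul_mem_orthogonalGroup hV₁ hV₂
  have hPQ : ∀ i j, P i j * Q i j ≤ ((1 / 2 : ℝ) • (P ⊙ P) + (1 / 2 : ℝ) • (Q ⊙ Q)) i j := by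
    intro i j
    simp only [Matrix.add_apply, Matrix.smul_apply, hadamard_apply, smul_eq_mul]
    nlinarith [sq_nonneg (P i j - Q i j)]
  calc trace (Aᵀ * B) = svals A ⬝ᵥ ((P ⊙ Q) *ᵥ svals B) := by
        conv_lhs => rw [hA, hB]
        exact trace_transpose_mul_eq_dotProduct_hadamard_mulVec _ _ _ _ _ _
    _ ≤ svals A ⬝ᵥ (((1 / 2 : ℝ) • (P ⊙ P) + (1 / 2 : ℝ) • (Q ⊙ Q)) *ᵥ svals B) := by
        simp only [dotProduct, mulVec]
        gcongr with i _ j _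
        · exact svals_nonneg A i
        · exact svals_nonneg B j
        · exact hPQ i j
    _ ≤ svals A ⬝ᵥ svals B :=
        dotProduct_mulVec_le_of_mem_doublyStochastic
          ((svals_antitone A).monovary (svals_antitone B))
          (convex_doublyStochastic (hadamard_self_mem_doublyStochastic hP)
            (hadamard_self_mem_doublyStochastic hQ) (by norm_num) (by norm_num) (by norm_num))

theorem trace_transpose_mul_self_eq_svals_dotProduct (A : Matrix (Fin n) (Fin n) ℝ) :
    trace (Aᵀ * A) = svals A ⬝ᵥ svals A := by
  obtain ⟨U, hU, V, hV, hA⟩ := exists_svd A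
  conv_lhs => rw [hA]
  exact trace_transpose_mul_of_mem_orthogonalGroup hU hV _ _

theorem sum_sum_sq_eq_sum_svals_sq (A : Matrix (Fin n) (Fin n) ℝ) :
    ∑ i, ∑ j, A i j ^ 2 = ∑ i, svals A i ^ 2 := by
  calc ∑ i, ∑ j, A i j ^ 2 = trace (Aᵀ * A) := by
        rw [trace, Finset.sum_comm]
        simp [mul_apply, sq]
    _ = ∑ i, svals A i ^ 2 := by
        rw [trace_transpose_mul_self_eq_svals_dotProduct, dotProduct]
        simp [sq]

theorem convexOn_sum_svals_sq_sub_sq_max (c : ℝ) (hc : 0 ≤ c) :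
    ConvexOn ℝ Set.univ
      (fun X : Matrix (Fin n) (Fin n) ℝ => ∑ i, (svals X i ^ 2 - max (c - svals X i) 0 ^ 2)) := by
  refine convexOn_of_le_of_exists_eq convex_univ
    (g := fun Z : {Z : Matrix (Fin n) (Fin n) ℝ // ∀ i, c ≤ svals Z i} =>
      fun X => 2 * trace (Xᵀ * Z.1) - trace (Z.1ᵀ * Z.1)) (fun Z => ?_) (fun Z X _ => ?_)
    (fun X _ => ?_)
  · refine ⟨convex_univ, fun _ _ _ _ _ _ _ _ hab => le_of_eq ?_⟩
    simp only [transpose_add, transpose_smul, Matrix.add_mul, Matrix.smul_mul, trace_add,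
      trace_smul, smul_eq_mul]
    linear_combination trace (Z.1ᵀ * Z.1) * hab
  · calc 2 * trace (Xᵀ * Z.1) - trace (Z.1ᵀ * Z.1)
        ≤ 2 * (svals X ⬝ᵥ svals Z.1) - svals Z.1 ⬝ᵥ svals Z.1 := by
          rw [trace_transpose_mul_self_eq_svals_dotProduct]
          gcongr
          exact trace_transpose_mul_le_svals_dotProduct X Z.1
      _ = ∑ i, (2 * svals X i * svals Z.1 i - svals Z.1 i ^ 2) := by
          simp only [dotProduct, Finset.mul_sum, ← Finset.sum_sub_distrib]
          exact Finset.sum_congr rfl fun i _ => by ring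
      _ ≤ _ := Finset.sum_le_sum fun i _ => two_mul_mul_sub_sq_le (Z.2 i) _
  · obtain ⟨U, hU, V, hV, hX⟩ := exists_svd X
    set m := fun i => max (svals X i) c
    refine ⟨⟨U * diagonal m * Vᵀ, le_svals_of_forall_le_mulVec hc
      (sq_mul_dotProduct_self_le_of_mem_orthogonalGroup hU hV (fun i => le_max_right _ _) hc)⟩,
      ?_⟩
    dsimp only
    conv_lhs => rw [hX]
    rw [trace_transpose_mul_of_mem_orthogonalGroup hU hV,
      trace_transpose_mul_of_mem_orthogonalGroup hU hV]
    simp only [dotProduct, Finset.mul_sum, ← Finset.sum_sub_distrib]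
    exact Finset.sum_congr rfl fun i _ => by rw [← two_mul_mul_max_sub_sq c]; ring

end SingularValues

theorem stmt_18 (n : ℕ) (lam a : ℝ) (hlam : 0 < lam) (ha : 0 < a) (h : a < 1 / lam)
    (φ : ℝ → ℝ)
    (hφ : ∀ x, φ x = if |x| ≤ 1 / a then |x| - a / 2 * x ^ 2 else 1 / (2 * a))
    (Y : Matrix (Fin n) (Fin n) ℝ) :
    StrictConvexOn ℝ Set.univ
      (fun X : Matrix (Fin n) (Fin n) ℝ =>
        (1 / 2) * (∑ i, ∑ j, (Y i j - X i j) ^ 2) + lam * ∑ i, φ (svals X i)) := by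
  have hla : lam * a < 1 := by rwa [lt_div_iff₀ hlam, mul_comm] at h
  have hφ' : ∀ s, 0 ≤ s → lam * φ s = lam / (2 * a) - lam * a / 2 * max (1 / a - s) 0 ^ 2 := by
    intro s hs
    rw [hφ, abs_of_nonneg hs]
    split_ifs with hsa
    · rw [max_eq_left (by linarith)]
      field_simp
      ring
    · rw [max_eq_right (by linarith)]
      ring
  have hq : ∀ y : ℝ,
      StrictConvexOn ℝ Set.univ (fun x => 1 / 2 * (y - x) ^ 2 - lam * a / 2 * x ^ 2) := by
    intro y
    convert strictConvexOn_univ_quadratic (α := (1 - lam * a) / 2) (by linarith) (-y) (y ^ 2 / 2)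
      using 1
    funext x
    ring
  have hΨ : ∀ X : Matrix (Fin n) (Fin n) ℝ,
      (1 / 2) * (∑ i, ∑ j, (Y i j - X i j) ^ 2) + lam * ∑ i, φ (svals X i)
        = ∑ i, ∑ j, (1 / 2 * (Y i j - X i j) ^ 2 - lam * a / 2 * X i j ^ 2)
          + lam * a / 2 * ∑ i, (svals X i ^ 2 - max (1 / a - svals X i) 0 ^ 2)
          + n * (lam / (2 * a)) := by
    intro X
    rw [Finset.mul_sum _ _ lam, Finset.sum_congr rfl fun i _ => hφ' _ (svals_nonneg X i)]
    simp only [Finset.sum_sub_distrib, ← Finset.mul_sum, Finset.sum_const, Finset.card_univ,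
      Fintype.card_fin, nsmul_eq_mul]
    linear_combination lam * a / 2 * sum_sum_sq_eq_sum_svals_sq X
  simp_rw [hΨ]
  exact ((strictConvexOn_univ_pi_sum fun i => strictConvexOn_univ_pi_sum fun j => hq (Y i j))
    |>.add_convexOn ((convexOn_sum_svals_sq_sub_sq_max (1 / a) (by positivity)).smul
      (by positivity))).add_const _
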